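/- Let p be a prime and let ℓ be a full-rank ℤ-submodule of ℤ^n of index p, regarded as a sublattice of I_n with the standard bilinear form. Then there exist integers u_2 ≤ u_3 ≤ ⋯ ≤ u_n with 0 ≤ u_i ≤ p/2 such that ℓ is isometric to the sublattice I_{u_2,…,u_n}(p) of ℤ^n spanned by the vectors e_2 + u_2·e_1, e_3 + u_3·e_1, …, e_n + u_n·e_1 and p·e_1, where e_1,…,e_n is the standard basis of ℤ^n. -/

import Mathlib

/-!
The quotient `ℤⁿ ⧸ ℓ` has prime order, so `ℓ` is the kernel of a linear form `x ↦ ∑ aᵢ xᵢ`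
with values in `ZMod p`, normalised so that `a i₀ = 1`. Writing every other coefficient as
`-aⱼ = ±mⱼ` with `0 ≤ mⱼ ≤ p / 2`, a signed permutation of coordinates (an isometry of `I_n`)
moving `i₀` to the first place and sorting the `mⱼ` transforms this form into
`y ↦ y₀ - ∑_{i ≠ 0} uᵢ yᵢ`, whose kernel is exactly the lattice spanned by `p e₀` and the
`eᵢ + uᵢ e₀`.
-/

open Matrix

section SignedPerm

variable {ι : Type*} (σ : Equiv.Perm ι) (δ : ι → ℤˣ)

def signedPerm : (ι → ℤ) ≃ₗ[ℤ] (ι → ℤ) :=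
  LinearEquiv.funCongrLeft ℤ ℤ σ ≪≫ₗ
    LinearEquiv.piCongrRight fun i => LinearEquiv.smulOfUnit (δ i)

@[simp]
theorem signedPerm_apply (x : ι → ℤ) (i : ι) : signedPerm σ δ x i = δ i • x (σ i) :=
  rfl

theorem dotProduct_signedPerm [Fintype ι] (x y : ι → ℤ) :
    signedPerm σ δ x ⬝ᵥ signedPerm σ δ y = x ⬝ᵥ y := by
  simp only [dotProduct, signedPerm_apply]
  rw [← Equiv.sum_comp σ fun j => x j * y j]
  refine Finset.sum_congr rfl fun i _ => ?_
  rcases Int.units_eq_one_or (δ i) with h | h <;> simp [h]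

variable [Fintype ι] {M : Type*} [AddCommGroup M] {a c : ι → M}

theorem linearCombination_comp_signedPerm (h : ∀ i, δ i • c i = a (σ i)) :
    Fintype.linearCombination ℤ c ∘ₗ (signedPerm σ δ).toLinearMap =
      Fintype.linearCombination ℤ a := by
  ext x
  simp only [LinearMap.comp_apply, LinearEquiv.coe_coe, Fintype.linearCombination_apply,
    signedPerm_apply]
  rw [← Equiv.sum_comp σ fun j => x j • a j]
  refine Finset.sum_congr rfl fun i _ => ?_
  rw [← h, smul_comm, smul_assoc]

theorem map_signedPerm_ker_linearCombination (h : ∀ i, δ i • c i = a (σ i)) :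
    (LinearMap.ker (Fintype.linearCombination ℤ a)).map (signedPerm σ δ).toLinearMap =
      LinearMap.ker (Fintype.linearCombination ℤ c) := by
  rw [← linearCombination_comp_signedPerm σ δ h, LinearMap.ker_comp,
    Submodule.map_comap_eq_of_surjective (signedPerm σ δ).surjective]

end SignedPerm

theorem ZMod.exists_units_smul_natAbs_valMinAbs {n : ℕ} (x : ZMod n) :
    ∃ s : ℤˣ, s • (x.valMinAbs.natAbs : ZMod n) = x := by
  rcases Int.natAbs_eq x.valMinAbs with h | h
  · exact ⟨1, by rw [one_smul, ← Int.cast_natCast, ← h, coe_valMinAbs]⟩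
  · exact ⟨-1, by
      rw [Units.neg_smul, one_smul, ← Int.cast_natCast, ← Int.cast_neg, ← h, coe_valMinAbs]⟩

theorem Tuple.exists_perm_zero_eq_and_monotone_on_ne_zero {α : Type*} [LinearOrder α] {n : ℕ}
    [NeZero n] (f : Fin n → α) (i₀ : Fin n) :
    ∃ σ : Equiv.Perm (Fin n), σ 0 = i₀ ∧ ∀ i j, i ≠ 0 → i ≤ j → f (σ i) ≤ f (σ j) := by
  classical
  -- sorting with `i₀` given the key `⊥` puts `i₀` first
  let g : Fin n → WithBot α := Function.update (fun i => f i) i₀ ⊥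
  have hg : ∀ i, i ≠ i₀ → g i = f i := fun i hi => Function.update_of_ne hi _ _
  set σ := Tuple.sort g
  have hmono : Monotone (g ∘ σ) := Tuple.monotone_sort g
  have hσ0 : σ 0 = i₀ := by
    by_contra h
    have hle := hmono (Fin.zero_le (σ.symm i₀))
    simp only [Function.comp_apply, Equiv.apply_symm_apply, g, Function.update_self,
      hg _ h] at hle
    exact WithBot.coe_ne_bot (le_bot_iff.mp hle)
  refine ⟨σ, hσ0, fun i j hi hij => ?_⟩
  have hj : j ≠ 0 := fun h => hi (nonpos_iff_eq_zero.mp (h ▸ hij))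
  have hne : ∀ k, k ≠ 0 → σ k ≠ i₀ := fun k hk h => hk (σ.injective (h.trans hσ0.symm))
  have := hmono hij
  simpa only [Function.comp_apply, hg _ (hne i hi), hg _ (hne j hj), WithBot.coe_le_coe] using this

theorem Submodule.exists_surjective_ker_eq_of_card_quotient_eq_prime {M : Type*} [AddCommGroup M]
    {p : ℕ} (hp : p.Prime) {ℓ : Submodule ℤ M} (hidx : Nat.card (M ⧸ ℓ) = p) :
    ∃ f : M →ₗ[ℤ] ZMod p, Function.Surjective f ∧ LinearMap.ker f = ℓ := by
  have := Fact.mk hp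
  let e : (M ⧸ ℓ) ≃+ ZMod p := addEquivOfPrimeCardEq hidx (Nat.card_zmod p)
  refine ⟨e.toIntLinearEquiv.toLinearMap ∘ₗ ℓ.mkQ, e.surjective.comp ℓ.mkQ_surjective, ?_⟩
  rw [LinearEquiv.ker_comp, Submodule.ker_mkQ]

theorem Submodule.exists_ker_linearCombination_eq_of_card_quotient_eq_prime {ι : Type*}
    [Fintype ι] [DecidableEq ι] {p : ℕ} (hp : p.Prime) {ℓ : Submodule ℤ (ι → ℤ)}
    (hidx : Nat.card ((ι → ℤ) ⧸ ℓ) = p) :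
    ∃ (a : ι → ZMod p) (i₀ : ι), a i₀ = 1 ∧ LinearMap.ker (Fintype.linearCombination ℤ a) = ℓ := by
  have := Fact.mk hp
  obtain ⟨f, hf, rfl⟩ := exists_surjective_ker_eq_of_card_quotient_eq_prime hp hidx
  have hf_eq : f = Fintype.linearCombination ℤ fun i => f (Pi.single i 1) := by
    ext i; simp
  obtain ⟨i₀, hi₀⟩ : ∃ i₀, f (Pi.single i₀ 1) ≠ 0 := by
    by_contra! h
    obtain ⟨x, hx⟩ := hf 1
    rw [hf_eq, Fintype.linearCombination_apply] at hx
    simp [h] at hx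
  set c := (f (Pi.single i₀ 1))⁻¹
  refine ⟨fun i => c * f (Pi.single i 1), i₀, inv_mul_cancel₀ hi₀, ?_⟩
  have hlc : Fintype.linearCombination ℤ (fun i => c * f (Pi.single i 1)) = c • f := by
    ext i; simp
  ext x
  simp [hlc, c, hi₀]

def primeIndexSublattice {ι : Type*} [DecidableEq ι] (o : ι) (p : ℕ) (u : ι → ℤ) :
    Submodule ℤ (ι → ℤ) :=
  Submodule.span ℤ ({(p : ℤ) • Pi.single o 1} ∪
    {w : ι → ℤ | ∃ i, i ≠ o ∧ w = Pi.single i 1 + u i • Pi.single o 1})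

theorem primeIndexSublattice_eq_ker {ι : Type*} [Fintype ι] [DecidableEq ι] (o : ι) (p : ℕ)
    (u : ι → ℤ) :
    primeIndexSublattice o p u = LinearMap.ker (Fintype.linearCombination ℤ
      (Function.update (fun i => -(u i : ZMod p)) o 1)) := by
  set K := LinearMap.ker (Fintype.linearCombination ℤ
    (Function.update (fun i => -(u i : ZMod p)) o 1))
  have hle : primeIndexSublattice o p u ≤ K := by
    rw [primeIndexSublattice, Submodule.span_le]
    rintro _ (rfl | ⟨i, hi, rfl⟩) <;>
      simp only [SetLike.mem_coe, K, LinearMap.mem_ker, map_add, map_smul,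
        Fintype.linearCombination_apply_single]
    · simp
    · simp [hi]
  refine le_antisymm hle fun y hy => ?_
  set v := ∑ i ∈ Finset.univ.erase o, y i • (Pi.single i 1 + u i • Pi.single o 1 : ι → ℤ)
  have hv : v ∈ primeIndexSublattice o p u :=
    Submodule.sum_mem _ fun i hi => Submodule.smul_mem _ _
      (Submodule.subset_span (Or.inr ⟨i, Finset.ne_of_mem_erase hi, rfl⟩))
  have hyv : y - v = (y - v) o • Pi.single o 1 := by
    ext j
    by_cases hj : j = o
    · subst hj; simp
    · simp [v, hj, Finset.sum_apply, Pi.single_apply]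
  have hK : y - v ∈ K := K.sub_mem hy (hle hv)
  rw [hyv, LinearMap.mem_ker, map_smul, Fintype.linearCombination_apply_single,
    Function.update_self, one_smul, zsmul_eq_mul, mul_one,
    ZMod.intCast_zmod_eq_zero_iff_dvd] at hK
  obtain ⟨k, hk⟩ := hK
  have hy_eq : y = k • ((p : ℤ) • Pi.single o 1) + v := by
    rw [smul_smul, mul_comm, ← hk, ← hyv, sub_add_cancel]
  rw [hy_eq]
  exact add_mem (Submodule.smul_mem _ _ (Submodule.subset_span (Or.inl rfl))) hv

/-- any full-rank sublattice of `I_n` of prime index `p` is isometric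
(as a lattice with the standard bilinear form on `ℤ^n`) to the sublattice
`I_{u_2,…,u_n}(p)` spanned by `e_2 + u_2 e_1, …, e_n + u_n e_1` and `p e_1`,
for some integers `0 ≤ u_2 ≤ ⋯ ≤ u_n ≤ p/2`. -/
theorem sublattice_of_prime_index_isometric (n : ℕ) [NeZero n] (p : ℕ) (hp : p.Prime)
    (ℓ : Submodule ℤ (Fin n → ℤ)) (hidx : Nat.card ((Fin n → ℤ) ⧸ ℓ) = p) :
    ∃ u : Fin n → ℤ,
      (∀ i : Fin n, i ≠ 0 → 0 ≤ u i ∧ 2 * u i ≤ (p : ℤ)) ∧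
      (∀ i j : Fin n, i ≠ 0 → i ≤ j → u i ≤ u j) ∧
      ∃ e : ℓ ≃ₗ[ℤ] (Submodule.span ℤ
          ({(p : ℤ) • Pi.single (0 : Fin n) 1} ∪
            {w : Fin n → ℤ | ∃ i : Fin n, i ≠ 0 ∧
              w = Pi.single i 1 + u i • Pi.single (0 : Fin n) 1})),
        ∀ x y : ℓ,
          ((e x : Fin n → ℤ) ⬝ᵥ (e y : Fin n → ℤ)) = (x : Fin n → ℤ) ⬝ᵥ (y : Fin n → ℤ) := by
  have := Fact.mk hp
  obtain ⟨a, i₀, ha, rfl⟩ :=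
    Submodule.exists_ker_linearCombination_eq_of_card_quotient_eq_prime hp hidx
  let m : Fin n → ℕ := fun j => (-a j).valMinAbs.natAbs
  choose ε hε using fun j => ZMod.exists_units_smul_natAbs_valMinAbs (-a j)
  have hε : ∀ j, ε j • (m j : ZMod p) = -a j := hε
  obtain ⟨σ, hσ0, hσ⟩ := Tuple.exists_perm_zero_eq_and_monotone_on_ne_zero m i₀
  refine ⟨fun i => m (σ i), fun i _ => ⟨by positivity, ?_⟩,
    fun i j hi hij => Int.ofNat_le.mpr (hσ i j hi hij), ?_⟩
  · have := ZMod.natAbs_valMinAbs_le (-a (σ i))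
    dsimp only [m]
    omega
  have hcoeff : ∀ i, Function.update ε i₀ 1 (σ i) •
      Function.update (fun i => -((m (σ i) : ℤ) : ZMod p)) 0 1 i = a (σ i) := by
    intro i
    rcases eq_or_ne i 0 with rfl | hi
    · simp [hσ0, ha]
    · have hσi : σ i ≠ i₀ := hσ0 ▸ σ.injective.ne hi
      rw [Function.update_of_ne hσi, Function.update_of_ne hi, smul_neg, Int.cast_natCast, hε,
        neg_neg]
  let F := signedPerm σ fun i => Function.update ε i₀ 1 (σ i)
  have hF := map_signedPerm_ker_linearCombination σ _ hcoeff
  rw [← primeIndexSublattice_eq_ker] at hF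
  exact ⟨F.ofSubmodules _ _ hF, fun x y => dotProduct_signedPerm _ _ _ _⟩
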